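/- arXiv:1002.4467 — 2 statements merged into one kernel-verified Lean document; each statement's English description precedes it below -/
import Mathlib

section
/- The group PSL(2, F_11) (the quotient of SL(2, ZMod 11) by its center) contains exactly 55 elements of order 2, and for any two distinct order-2 elements g and h of PSL(2, F_11), the order of the product g*h belongs to the set {2, 3, 5, 6}. -/
/-- `PSL(2, F₁₁)`: the quotient of `SL(2, ZMod 11)` by its center. -/
abbrev PSL11 : Type :=
  Matrix.ProjectiveSpecialLinearGroup (Fin 2) (ZMod 11)

namespace PSLAux

abbrev SL11 : Type := Matrix.SpecialLinearGroup (Fin 2) (ZMod 11)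

abbrev V : Type := ZMod 11
abbrev T4 : Type := V × V × V × V

def tm4 (q : T4) : Matrix (Fin 2) (Fin 2) V := !![q.1, q.2.1; q.2.2.1, q.2.2.2]

def qmul (q r : T4) : T4 :=
  (q.1 * r.1 + q.2.1 * r.2.2.1, q.1 * r.2.1 + q.2.1 * r.2.2.2,
   q.2.2.1 * r.1 + q.2.2.2 * r.2.2.1, q.2.2.1 * r.2.1 + q.2.2.2 * r.2.2.2)

def qneg (q : T4) : T4 := (-q.1, -q.2.1, -q.2.2.1, -q.2.2.2)

def qdet (q : T4) : V := q.1 * q.2.2.2 - q.2.1 * q.2.2.1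

def qe : T4 := (1, 0, 0, 1)

/-- projective equality on tuples -/
def pe (q r : T4) : Prop := q = r ∨ q = qneg r

instance (q r : T4) : Decidable (pe q r) := inferInstanceAs (Decidable (_ ∨ _))

lemma sq_roots : ∀ r : V, r ^ 2 = 1 → r = 1 ∨ r = -1 := by decide

lemma tm4_mul (q r : T4) : tm4 (qmul q r) = tm4 q * tm4 r := by
  rw [tm4, tm4, tm4, Matrix.mul_fin_two]; rfl

lemma tm4_neg (q : T4) : tm4 (qneg q) = -tm4 q := by
  ext i j; fin_cases i <;> fin_cases j <;> simp [tm4, qneg]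

lemma tm4_one : tm4 qe = 1 := by
  rw [Matrix.one_fin_two]; rfl

lemma tm4_inj {q r : T4} (h : tm4 q = tm4 r) : q = r := by
  obtain ⟨a, b, c, d⟩ := q
  obtain ⟨a', b', c', d'⟩ := r
  rw [← Matrix.ext_iff] at h
  have h00 := h 0 0
  have h01 := h 0 1
  have h10 := h 1 0
  have h11 := h 1 1
  simp [tm4] at h00 h01 h10 h11
  simp [h00, h01, h10, h11]

lemma tm4_det (q : T4) : (tm4 q).det = qdet q := by
  rw [tm4, Matrix.det_fin_two_of]; rfl

lemma qdet_mul (q r : T4) : qdet (qmul q r) = qdet q * qdet r := by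
  obtain ⟨a, b, c, d⟩ := q
  obtain ⟨a', b', c', d'⟩ := r
  simp only [qdet, qmul]
  ring

/-- SL₂ element from a tuple with determinant 1. -/
def sl4 (q : T4) (h : qdet q = 1) : SL11 := ⟨tm4 q, (tm4_det q).trans h⟩

lemma sl4_mul (q r : T4) (hq : qdet q = 1) (hr : qdet r = 1) :
    sl4 q hq * sl4 r hr = sl4 (qmul q r) (by rw [qdet_mul, hq, hr, mul_one]) :=
  Subtype.ext (tm4_mul q r).symm

lemma sl4_one (h : qdet qe = 1) : sl4 qe h = 1 := Subtype.ext tm4_one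

lemma sl4_neg (q : T4) (hq : qdet q = 1) (h : qdet (qneg q) = 1) :
    sl4 (qneg q) h = -sl4 q hq := Subtype.ext (tm4_neg q)

lemma center_iff {A : SL11} : A ∈ Subgroup.center SL11 ↔ A = 1 ∨ A = -1 := by
  rw [Matrix.SpecialLinearGroup.mem_center_iff]
  constructor
  · rintro ⟨r, hr, hA⟩
    rw [Fintype.card_fin] at hr
    rcases sq_roots r hr with rfl | rfl
    · left
      apply Subtype.ext
      rw [← hA, map_one]
      rfl
    · right
      apply Subtype.ext
      rw [← hA, map_neg, map_one]
      rfl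
  · rintro (rfl | rfl)
    · exact ⟨1, one_pow _, by rw [map_one]; rfl⟩
    · exact ⟨-1, by rw [Fintype.card_fin]; decide, by rw [map_neg, map_one]; rfl⟩

lemma mk_eq {x y : SL11} :
    (QuotientGroup.mk x : PSL11) = QuotientGroup.mk y ↔ x = y ∨ x = -y := by
  rw [QuotientGroup.eq, center_iff]
  constructor
  · rintro (h | h)
    · left; exact inv_mul_eq_one.mp h
    · right
      have h' : y = x * -1 := by rw [← h, mul_inv_cancel_left]
      rw [h', mul_neg_one, neg_neg]
  · rintro (rfl | rfl)
    · left; exact inv_mul_cancel x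
    · right; rw [inv_neg, neg_mul, inv_mul_cancel]

/-- PSL₂ element from a tuple with determinant 1. -/
def psl4 (q : T4) (h : qdet q = 1) : PSL11 := QuotientGroup.mk (sl4 q h)

lemma psl4_mul (q r : T4) (hq : qdet q = 1) (hr : qdet r = 1) :
    psl4 q hq * psl4 r hr = psl4 (qmul q r) (by rw [qdet_mul, hq, hr, mul_one]) := by
  rw [psl4, psl4, psl4, ← QuotientGroup.mk_mul, sl4_mul]

lemma psl4_eq (q r : T4) (hq : qdet q = 1) (hr : qdet r = 1) :
    psl4 q hq = psl4 r hr ↔ pe q r := by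
  rw [psl4, psl4, mk_eq, pe]
  constructor
  · rintro (h | h)
    · left; exact tm4_inj (congrArg Subtype.val h)
    · right
      apply tm4_inj
      rw [tm4_neg]
      exact congrArg Subtype.val h
  · rintro (rfl | rfl)
    · left; rfl
    · right
      exact Subtype.ext (tm4_neg r)

lemma psl4_eq_one (q : T4) (hq : qdet q = 1) : psl4 q hq = 1 ↔ pe q qe := by
  have h1 : qdet qe = 1 := by decide
  rw [show (1 : PSL11) = psl4 qe h1 by rw [psl4, sl4_one]; rfl]
  exact psl4_eq q qe hq h1

/-- the 55 canonical tuples -/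
def Ltrip : List T4 :=
  [(0,1,10,0), (0,2,5,0), (0,3,7,0), (0,4,8,0), (0,5,2,0), (1,1,9,10), (1,2,10,10), (1,3,3,10),
   (1,4,5,10), (1,5,4,10), (1,6,7,10), (1,7,6,10), (1,8,8,10), (1,9,1,10), (1,10,2,10), (2,1,6,9),
   (2,2,3,9), (2,3,2,9), (2,4,7,9), (2,5,10,9), (2,6,1,9), (2,7,4,9), (2,8,9,9), (2,9,8,9), (2,10,5,9),
   (3,1,1,8), (3,2,6,8), (3,3,4,8), (3,4,3,8), (3,5,9,8), (3,6,2,8), (3,7,8,8), (3,8,7,8), (3,9,5,8),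
   (3,10,10,8), (4,1,5,7), (4,2,8,7), (4,3,9,7), (4,4,4,7), (4,5,1,7), (4,6,10,7), (4,7,7,7),
   (4,8,2,7), (4,9,3,7), (4,10,6,7), (5,1,7,6), (5,2,9,6), (5,3,6,6), (5,4,10,6), (5,5,8,6), (5,6,3,6),
   (5,7,1,6), (5,8,5,6), (5,9,2,6), (5,10,4,6)]

def T : List T4 := Ltrip ++ Ltrip.map qneg

instance (priority := 2000) bAllT4 (p : T4 → Prop) [DecidablePred p] (l : List T4) :
    Decidable (∀ x ∈ l, p x) := List.decidableBAll p l

set_option maxRecDepth 8000 in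
lemma Ldet : ∀ q ∈ Ltrip, qdet q = 1 := by decide

def Lp : List PSL11 := Ltrip.pmap psl4 Ldet

-- the tuple-level computations
set_option maxRecDepth 8000 in
lemma D1 : Ltrip.Pairwise (fun q r => ¬ pe q r) := by decide

set_option maxRecDepth 8000 in
lemma D2 : ∀ q ∈ Ltrip, pe (qmul q q) qe ∧ ¬ pe q qe := by decide

set_option maxHeartbeats 4000000 in
set_option maxRecDepth 8000 in
lemma D3 : ∀ q ∈ Ltrip, ∀ r ∈ Ltrip, ¬ pe q r →
    ((pe (qmul (qmul q r) (qmul q r)) qe ∧ ¬ pe (qmul q r) qe) ∨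
     (pe (qmul (qmul (qmul q r) (qmul q r)) (qmul q r)) qe ∧ ¬ pe (qmul q r) qe) ∨
     (pe (qmul (qmul (qmul (qmul q r) (qmul q r)) (qmul q r)) (qmul (qmul q r) (qmul q r))) qe
        ∧ ¬ pe (qmul q r) qe) ∨
     (pe (qmul (qmul (qmul (qmul q r) (qmul q r)) (qmul q r)) (qmul (qmul (qmul q r) (qmul q r)) (qmul q r))) qe
        ∧ ¬ pe (qmul (qmul q r) (qmul q r)) qe ∧ ¬ pe (qmul (qmul (qmul q r) (qmul q r)) (qmul q r)) qe)) := by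
  decide

set_option maxHeartbeats 8000000 in
set_option maxRecDepth 8000 in
lemma D4' : ∀ a b c d : V, pe (qmul (a,b,c,d) (a,b,c,d)) qe → ¬ pe (a,b,c,d) qe →
    qdet (a,b,c,d) = 1 → (a,b,c,d) ∈ T := by decide

lemma D4 : ∀ q : T4, pe (qmul q q) qe → ¬ pe q qe → qdet q = 1 → q ∈ T := fun q =>
  D4' q.1 q.2.1 q.2.2.1 q.2.2.2

lemma mem_Lp_of_mem_T (q : T4) (hq : qdet q = 1) (hT : q ∈ T) : psl4 q hq ∈ Lp := by
  rw [T, List.mem_append] at hT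
  rcases hT with h | h
  · exact List.mem_pmap.mpr ⟨q, h, rfl⟩
  · rw [List.mem_map] at h
    obtain ⟨r, hr, hqr⟩ := h
    have hdr : qdet r = 1 := Ldet r hr
    have he : psl4 q hq = psl4 r hdr := (psl4_eq q r hq hdr).mpr (Or.inr hqr.symm)
    rw [he]
    exact List.mem_pmap.mpr ⟨r, hr, rfl⟩

lemma completeness : ∀ g : PSL11, g * g = 1 → g ≠ 1 → g ∈ Lp := by
  intro g
  induction g using QuotientGroup.induction_on with
  | H A =>
    intro hsq hne
    have hq : qdet (A.1 0 0, A.1 0 1, A.1 1 0, A.1 1 1) = 1 := by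
      have h2 := A.2
      rw [Matrix.det_fin_two] at h2
      exact h2
    have hA : A = sl4 _ hq := Subtype.ext (Matrix.eta_fin_two A.1)
    rw [show (QuotientGroup.mk A : PSL11) = psl4 _ hq from congrArg _ hA] at hsq hne ⊢
    rw [psl4_mul, psl4_eq_one] at hsq
    have hne' : ¬ pe _ qe := fun hp => hne ((psl4_eq_one _ hq).mpr hp)
    exact mem_Lp_of_mem_T _ hq (D4 _ hsq hne' hq)

lemma key : ∀ g : PSL11, orderOf g = 2 ↔ g ∈ Lp := by
  intro g
  constructor
  · intro hg
    refine completeness g ?_ ?_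
    · rw [← pow_two]
      simpa [hg] using pow_orderOf_eq_one g
    · intro h1
      rw [h1, orderOf_one] at hg
      exact absurd hg (by norm_num)
  · intro hg
    obtain ⟨q, hqmem, rfl⟩ := List.mem_pmap.mp hg
    obtain ⟨h1, h2⟩ := D2 q hqmem
    refine orderOf_eq_prime ?_ ?_
    · rw [pow_two, psl4_mul, psl4_eq_one]
      exact h1
    · exact fun he => h2 ((psl4_eq_one _ _).mp he)

lemma order_six {G : Type*} [Group G] {g : G} (h6 : g ^ 6 = 1) (h2 : g ^ 2 ≠ 1)
    (h3 : g ^ 3 ≠ 1) : orderOf g = 6 := by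
  have hd : orderOf g ∣ 6 := orderOf_dvd_of_pow_eq_one h6
  have h16 : orderOf g ≤ 6 := Nat.le_of_dvd (by norm_num) hd
  interval_cases hn : orderOf g
  · norm_num at hd
  · exact absurd (by rw [orderOf_eq_one_iff.mp hn, one_pow]) h2
  · exact absurd (hn ▸ pow_orderOf_eq_one g) h2
  · exact absurd (hn ▸ pow_orderOf_eq_one g) h3
  · norm_num at hd
  · norm_num at hd
  · rfl

lemma Lp_nodup : Lp.Nodup := by
  have : Lp.Pairwise (· ≠ ·) := by
    refine List.Pairwise.pmap D1 _ ?_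
    intro a ha b hb hR he
    exact hR ((psl4_eq a b ha hb).mp he)
  exact this

end PSLAux

open PSLAux in
/-- `PSL(2, F₁₁)` contains exactly 55 elements of order 2, and the product of any
two distinct order-2 elements has order in `{2, 3, 5, 6}`. -/
theorem psl2_f11_involutions :
    Nat.card {g : PSL11 // orderOf g = 2} = 55 ∧
    ∀ g h : PSL11, orderOf g = 2 → orderOf h = 2 → g ≠ h →
      orderOf (g * h) ∈ ({2, 3, 5, 6} : Set ℕ) := by
  classical
  constructor
  · have e : {g : PSL11 // orderOf g = 2} ≃ {g : PSL11 // g ∈ Lp.toFinset} :=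
      Equiv.subtypeEquivRight fun g => by rw [key g, List.mem_toFinset]
    rw [Nat.card_congr e, Nat.card_eq_finsetCard, List.toFinset_card_of_nodup Lp_nodup]
    rfl
  · intro g h hg hh hne
    obtain ⟨q, hqmem, rfl⟩ := List.mem_pmap.mp ((key g).mp hg)
    obtain ⟨r, hrmem, rfl⟩ := List.mem_pmap.mp ((key h).mp hh)
    have hpe : ¬ pe q r := fun hp => hne ((psl4_eq q r _ _).mpr hp)
    have hq' : qdet q = 1 := Ldet q hqmem
    have hr' : qdet r = 1 := Ldet r hrmem
    have e1 := psl4_mul q r (Ldet q hqmem) (Ldet r hrmem)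
    set G1 := psl4 q (Ldet q hqmem) * psl4 r (Ldet r hrmem) with hG1
    have e2 : G1 ^ 2 = psl4 (qmul (qmul q r) (qmul q r))
        (by simp [qdet_mul, hq', hr']) := by
      rw [pow_two, e1, psl4_mul]
    have e3 : G1 ^ 3 = psl4 (qmul (qmul (qmul q r) (qmul q r)) (qmul q r))
        (by simp [qdet_mul, hq', hr']) := by
      rw [pow_succ, e2, e1, psl4_mul]
    have e5 : G1 ^ 5 = psl4 (qmul (qmul (qmul (qmul q r) (qmul q r)) (qmul q r))
        (qmul (qmul q r) (qmul q r)))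
        (by simp [qdet_mul, hq', hr']) := by
      rw [show (5 : ℕ) = 3 + 2 from rfl, pow_add, e3, e2, psl4_mul]
    have e6 : G1 ^ 6 = psl4 (qmul (qmul (qmul (qmul q r) (qmul q r)) (qmul q r))
        (qmul (qmul (qmul q r) (qmul q r)) (qmul q r)))
        (by simp [qdet_mul, hq', hr']) := by
      rw [show (6 : ℕ) = 3 + 3 from rfl, pow_add, e3, psl4_mul]
    simp only [Set.mem_insert_iff, Set.mem_singleton_iff]
    rcases D3 q hqmem r hrmem hpe with ⟨h1, h2⟩ | ⟨h1, h2⟩ | ⟨h1, h2⟩ | ⟨h1, h2, h3⟩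
    · left
      refine orderOf_eq_prime ?_ ?_
      · rw [e2, psl4_eq_one]; exact h1
      · rw [e1]; exact fun he => h2 ((psl4_eq_one _ _).mp he)
    · right; left
      refine orderOf_eq_prime ?_ ?_
      · rw [e3, psl4_eq_one]; exact h1
      · rw [e1]; exact fun he => h2 ((psl4_eq_one _ _).mp he)
    · right; right; left
      haveI : Fact (Nat.Prime 5) := ⟨by norm_num⟩
      refine orderOf_eq_prime ?_ ?_
      · rw [e5, psl4_eq_one]; exact h1
      · rw [e1]; exact fun he => h2 ((psl4_eq_one _ _).mp he)
    · right; right; right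
      refine order_six ?_ ?_ ?_
      · rw [e6, psl4_eq_one]; exact h1
      · rw [e2]; exact fun he => h2 ((psl4_eq_one _ _).mp he)
      · rw [e3]; exact fun he => h3 ((psl4_eq_one _ _).mp he)
end

section
/- Let I be the 15-element set of involutions of the alternating group A_5, and let M be the symmetric integer matrix indexed by I × I with entries M(g,g) = -4, and for g ≠ h: M(g,h) = 0 if gh has order 2, M(g,h) = 2 if gh has order 3, and M(g,h) = 1 if gh has order 5. Then det M = 2^24 · 3^6, and, viewed as a real symmetric matrix, M has exactly 1 positive eigenvalue and exactly 14 negative eigenvalues (counted with multiplicity); in particular M is nondegenerate of rank 15 and signature (1, 14). -/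
/-- The set of involutions (order-2 elements) of the alternating group `A₅`. -/
abbrev InvA5 : Type := {g : alternatingGroup (Fin 5) // orderOf g = 2}

noncomputable instance : Fintype InvA5 := Fintype.ofFinite _
noncomputable instance : DecidableEq InvA5 := Classical.decEq _

/-- The intersection matrix of the 15 genus-2 curves on a Fano surface of type
`A₅`: diagonal entries `-4`; for `g ≠ h` the entry is `2` if `gh` has order 3,
`1` if `gh` has order 5, and `0` if `gh` has order 2. -/
noncomputable def a5Matrix : Matrix InvA5 InvA5 ℤ :=
  Matrix.of fun g h =>
    if g = h then -4
    else if orderOf (g.1 * h.1) = 3 then 2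
    else if orderOf (g.1 * h.1) = 5 then 1
    else 0

/-- The same matrix viewed as a real matrix. -/
noncomputable def a5MatrixR : Matrix InvA5 InvA5 ℝ :=
  a5Matrix.map (Int.cast : ℤ → ℝ)

/-!
Listing the 15 involutions of `A₅` (the products of two disjoint transpositions) turns the matrix
into an explicit integer matrix, for which one checks by computation that
`(M - 12)(M + 2)(M + 6)(M + 8) = 0` and that `tr M^k = 15, -60, 600, -1440` for `k = 0, 1, 2, 3`.
Hence every eigenvalue lies in `{12, -2, -6, -8}`, and the four multiplicities solve a Vandermonde
system: they are `1, 5, 5, 4`. So `det M = 12 · 2⁵ · 6⁵ · 8⁴ = 2²⁴ · 3⁶` and the signature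
is `(1, 14)`.
-/

open Matrix Polynomial Finset

namespace Finset

@[to_additive]
lemma prod_univ_comp_of_mapsTo {ι κ M : Type*} [Fintype ι] [DecidableEq κ] [CommMonoid M]
    {g : ι → κ} {t : Finset κ} (h : ∀ i, g i ∈ t) (f : κ → M) :
    ∏ i, f (g i) = ∏ j ∈ t, f j ^ #{i | g i = j} := by
  rw [← prod_fiberwise_of_maps_to' (fun i _ ↦ h i)]
  simp only [prod_const]

end Finset

lemma Nat.card_subtype_comp_of_mapsTo {ι κ : Type*} [Fintype ι] [DecidableEq κ] {g : ι → κ}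
    {t : Finset κ} (h : ∀ i, g i ∈ t) (P : κ → Prop) [DecidablePred P] :
    Nat.card {i // P (g i)} = ∑ j ∈ t with P j, #{i | g i = j} := by
  rw [Nat.card_eq_fintype_card, Fintype.card_subtype, card_filter,
    sum_univ_comp_of_mapsTo h (fun j ↦ if P j then 1 else 0), sum_filter]
  simp

lemma orderOf_mul_comm {G : Type*} [Group G] (a b : G) : orderOf (a * b) = orderOf (b * a) :=
  (SemiconjBy.orderOf_eq a (mul_assoc a b a).symm).symm

lemma mul_ne_one_of_sq_eq_one {G : Type*} [Group G] {a b : G} (hb : b ^ 2 = 1) (hab : a ≠ b) :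
    a * b ≠ 1 := fun h ↦ hab <| by
  rw [eq_inv_of_mul_eq_one_left h, inv_eq_of_mul_eq_one_left (by rwa [← pow_two])]

namespace Matrix.IsHermitian

variable {𝕜 n : Type*} [RCLike 𝕜] [Fintype n] [DecidableEq n] {A : Matrix n n 𝕜}

lemma trace_pow (hA : A.IsHermitian) (k : ℕ) :
    (A ^ k).trace = ∑ i, (hA.eigenvalues i : 𝕜) ^ k := by
  conv_lhs => rw [hA.spectral_theorem, ← map_pow, Unitary.conjStarAlgAut_apply, trace_mul_cycle,
    Unitary.coe_star_mul_self, one_mul, diagonal_pow, trace_diagonal]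
  rfl

lemma eval_eigenvalues_eq_zero (hA : A.IsHermitian) {p : ℝ[X]} (hp : aeval A p = 0) (i : n) :
    p.eval (hA.eigenvalues i) = 0 := by
  have : Nonempty n := ⟨i⟩
  simpa [hp, spectrum.zero_eq] using
    spectrum.subset_polynomial_aeval A p ⟨_, hA.eigenvalues_mem_spectrum_real i, rfl⟩

end Matrix.IsHermitian

lemma InvA5.sq_eq_one (g : InvA5) : g.1 ^ 2 = 1 := (orderOf_eq_prime_iff.mp g.2).1

lemma a5Matrix_isSymm : a5Matrix.IsSymm :=
  IsSymm.ext fun g h ↦ by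
    simp only [a5Matrix, of_apply, eq_comm (a := h), orderOf_mul_comm h.1]

lemma a5MatrixR_isHermitian : a5MatrixR.IsHermitian :=
  isHermitian_iff_isSymm.mpr (a5Matrix_isSymm.map _)

lemma a5Matrix_apply_of_ne {g h : InvA5} (hgh : g ≠ h) :
    a5Matrix g h =
      if (g.1 * h.1) ^ 3 = 1 then 2 else if (g.1 * h.1) ^ 5 = 1 then 1 else 0 := by
  have : Fact (Nat.Prime 5) := ⟨by norm_num⟩
  have hne : g.1 * h.1 ≠ 1 := mul_ne_one_of_sq_eq_one h.sq_eq_one (Subtype.coe_injective.ne hgh)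
  simp [a5Matrix, hgh, orderOf_eq_prime_iff, hne]

def involutionList : Fin 15 → Equiv.Perm (Fin 5) :=
  ![Equiv.swap 1 2 * Equiv.swap 3 4, Equiv.swap 1 3 * Equiv.swap 2 4,
    Equiv.swap 1 4 * Equiv.swap 2 3, Equiv.swap 0 1 * Equiv.swap 3 4,
    Equiv.swap 0 1 * Equiv.swap 2 3, Equiv.swap 0 1 * Equiv.swap 2 4,
    Equiv.swap 0 2 * Equiv.swap 3 4, Equiv.swap 0 2 * Equiv.swap 1 3,
    Equiv.swap 0 2 * Equiv.swap 1 4, Equiv.swap 0 3 * Equiv.swap 2 4,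
    Equiv.swap 0 3 * Equiv.swap 1 2, Equiv.swap 0 3 * Equiv.swap 1 4,
    Equiv.swap 0 4 * Equiv.swap 2 3, Equiv.swap 0 4 * Equiv.swap 1 2,
    Equiv.swap 0 4 * Equiv.swap 1 3]

def a5Table : Matrix (Fin 15) (Fin 15) ℤ :=
  !![-4, 0, 0, 2, 1, 1, 2, 1, 1, 1, 2, 1, 1, 2, 1;
    0, -4, 0, 1, 1, 2, 1, 2, 1, 2, 1, 1, 1, 1, 2;
    0, 0, -4, 1, 2, 1, 1, 1, 2, 1, 1, 2, 2, 1, 1;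
    2, 1, 1, -4, 2, 2, 2, 1, 1, 1, 1, 0, 1, 1, 0;
    1, 1, 2, 2, -4, 2, 1, 0, 1, 1, 0, 1, 2, 1, 1;
    1, 2, 1, 2, 2, -4, 1, 1, 0, 2, 1, 1, 1, 0, 1;
    2, 1, 1, 2, 1, 1, -4, 2, 2, 0, 1, 1, 0, 1, 1;
    1, 2, 1, 1, 0, 1, 2, -4, 2, 1, 0, 1, 1, 1, 2;
    1, 1, 2, 1, 1, 0, 2, 2, -4, 1, 1, 2, 1, 0, 1;
    1, 2, 1, 1, 1, 2, 0, 1, 1, -4, 2, 2, 0, 1, 1;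
    2, 1, 1, 1, 0, 1, 1, 0, 1, 2, -4, 2, 1, 2, 1;
    1, 1, 2, 0, 1, 1, 1, 1, 2, 2, 2, -4, 1, 1, 0;
    1, 1, 2, 1, 2, 1, 0, 1, 1, 0, 1, 1, -4, 2, 2;
    2, 1, 1, 1, 1, 0, 1, 1, 0, 1, 2, 1, 2, -4, 2;
    1, 2, 1, 0, 1, 1, 1, 2, 1, 1, 1, 0, 2, 2, -4]

lemma involutionList_spec : ∀ i,
    Equiv.Perm.sign (involutionList i) = 1 ∧ involutionList i ^ 2 = 1 ∧ involutionList i ≠ 1 := by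
  decide

lemma involutionList_injective : Function.Injective involutionList := by decide

set_option maxRecDepth 4000 in
lemma mem_range_involutionList :
    ∀ σ : Equiv.Perm (Fin 5), Equiv.Perm.sign σ = 1 → σ ^ 2 = 1 → σ ≠ 1 →
      σ ∈ Set.range involutionList := by
  decide

set_option maxRecDepth 4000 in
lemma a5Table_eq : a5Table = Matrix.of fun i j ↦
    if i = j then -4
    else if (involutionList i * involutionList j) ^ 3 = 1 then 2
    else if (involutionList i * involutionList j) ^ 5 = 1 then 1
    else 0 := by
  decide

lemma a5Table_quartic : (a5Table - 12) * (a5Table + 2) * (a5Table + 6) * (a5Table + 8) = 0 := by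
  decide

lemma a5Table_trace_pow :
    a5Table.trace = -60 ∧ (a5Table ^ 2).trace = 600 ∧ (a5Table ^ 3).trace = -1440 := by
  decide

def involutionListA5 (i : Fin 15) : InvA5 :=
  ⟨⟨involutionList i, Equiv.Perm.mem_alternatingGroup.mpr (involutionList_spec i).1⟩,
    by rw [Subgroup.orderOf_mk, orderOf_eq_prime_iff]; exact (involutionList_spec i).2⟩

lemma involutionListA5_bijective : Function.Bijective involutionListA5 := by
  refine ⟨fun i j h ↦ involutionList_injective (congrArg (fun g : InvA5 ↦ g.1.1) h), ?_⟩
  rintro ⟨⟨σ, hσ⟩, h2⟩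
  rw [Subgroup.orderOf_mk, orderOf_eq_prime_iff] at h2
  obtain ⟨i, hi⟩ := mem_range_involutionList σ (Equiv.Perm.mem_alternatingGroup.mp hσ) h2.1 h2.2
  exact ⟨i, Subtype.ext (Subtype.ext hi)⟩

noncomputable def involutionEquiv : Fin 15 ≃ InvA5 := .ofBijective _ involutionListA5_bijective

lemma a5Matrix_submatrix_involutionEquiv :
    a5Matrix.submatrix involutionEquiv involutionEquiv = a5Table := by
  ext i j
  rw [a5Table_eq, submatrix_apply, of_apply]
  by_cases hij : i = j
  · simp [hij, a5Matrix]
  · rw [a5Matrix_apply_of_ne (involutionEquiv.injective.ne hij), if_neg hij]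
    simp [involutionEquiv, involutionListA5, Subtype.ext_iff]

noncomputable def a5TableToReal : Matrix (Fin 15) (Fin 15) ℤ →+* Matrix InvA5 InvA5 ℝ :=
  (reindexAlgEquiv ℝ ℝ involutionEquiv).toRingHom.comp (Int.castRingHom ℝ).mapMatrix

lemma a5TableToReal_a5Table : a5TableToReal a5Table = a5MatrixR := by
  rw [← a5Matrix_submatrix_involutionEquiv]
  ext g h
  simp [a5TableToReal, a5MatrixR]

lemma trace_a5TableToReal (X : Matrix (Fin 15) (Fin 15) ℤ) :
    (a5TableToReal X).trace = X.trace := by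
  simp [a5TableToReal, trace, Equiv.sum_comp involutionEquiv.symm (fun i ↦ (X i i : ℝ))]

lemma a5MatrixR_quartic :
    (a5MatrixR - 12) * (a5MatrixR + 2) * (a5MatrixR + 6) * (a5MatrixR + 8) = 0 := by
  simpa only [map_mul, map_sub, map_add, map_ofNat, map_zero, a5TableToReal_a5Table] using
    congrArg a5TableToReal a5Table_quartic

lemma eigenvalues_a5MatrixR_mem (hM : a5MatrixR.IsHermitian) (i : InvA5) :
    hM.eigenvalues i ∈ ({12, -2, -6, -8} : Finset ℝ) := by
  have := hM.eval_eigenvalues_eq_zero (p := (X - 12) * (X + 2) * (X + 6) * (X + 8))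
    (by simpa only [map_mul, map_sub, map_add, aeval_X, map_ofNat] using a5MatrixR_quartic) i
  simp only [eval_mul, eval_sub, eval_add, eval_X, eval_ofNat, mul_eq_zero, sub_eq_zero,
    add_eq_zero_iff_eq_neg] at this
  simp only [mem_insert, mem_singleton]
  tauto

lemma card_eigenvalues_a5MatrixR_eq (hM : a5MatrixR.IsHermitian) :
    #{i | hM.eigenvalues i = 12} = 1 ∧ #{i | hM.eigenvalues i = -2} = 5 ∧
      #{i | hM.eigenvalues i = -6} = 5 ∧ #{i | hM.eigenvalues i = -8} = 4 := by
  have power_sum (k : ℕ) :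
      (#{i | hM.eigenvalues i = 12} : ℝ) * 12 ^ k + #{i | hM.eigenvalues i = -2} * (-2) ^ k +
        #{i | hM.eigenvalues i = -6} * (-6) ^ k + #{i | hM.eigenvalues i = -8} * (-8) ^ k =
        (a5Table ^ k).trace := by
    rw [← trace_a5TableToReal, map_pow, a5TableToReal_a5Table, hM.trace_pow]
    simp only [RCLike.ofReal_real_eq_id, id_eq]
    rw [sum_univ_comp_of_mapsTo (eigenvalues_a5MatrixR_mem hM) (· ^ k)]
    norm_num [sum_insert, add_assoc]
  have e0 := power_sum 0
  have e1 := power_sum 1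
  have e2 := power_sum 2
  have e3 := power_sum 3
  norm_num [a5Table_trace_pow] at e0 e1 e2 e3
  refine ⟨?_, ?_, ?_, ?_⟩ <;> (rw [← Nat.cast_inj (R := ℝ)]; push_cast; linarith)

lemma a5Matrix_det : a5Matrix.det = 2 ^ 24 * 3 ^ 6 := by
  have hM := a5MatrixR_isHermitian
  obtain ⟨m₁, m₂, m₃, m₄⟩ := card_eigenvalues_a5MatrixR_eq hM
  have hdet : a5MatrixR.det =
      ∏ r ∈ ({12, -2, -6, -8} : Finset ℝ), r ^ #{i | hM.eigenvalues i = r} := by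
    rw [hM.det_eq_prod_eigenvalues]
    simp only [RCLike.ofReal_real_eq_id, id_eq]
    exact prod_univ_comp_of_mapsTo (eigenvalues_a5MatrixR_mem hM) id
  norm_num [prod_insert, m₁, m₂, m₃, m₄] at hdet
  have hcast : (a5Matrix.det : ℝ) = a5MatrixR.det := (Int.castRingHom ℝ).map_det a5Matrix
  exact_mod_cast hcast.trans hdet

/-- The intersection matrix of the 15 genus-2 curves on a Fano surface of type
`A₅` has determinant `2²⁴ · 3⁶` and, as a real symmetric matrix, exactly 1
positive and 14 negative eigenvalues: it is nondegenerate of rank 15 and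
signature `(1, 14)`. -/
theorem a5Matrix_det_signature :
    a5Matrix.det = 2 ^ 24 * 3 ^ 6 ∧
    a5MatrixR.IsHermitian ∧
    ∀ hM : a5MatrixR.IsHermitian,
      Nat.card {i : InvA5 // 0 < hM.eigenvalues i} = 1 ∧
      Nat.card {i : InvA5 // hM.eigenvalues i < 0} = 14 := by
  refine ⟨a5Matrix_det, a5MatrixR_isHermitian, fun hM ↦ ?_⟩
  obtain ⟨m₁, m₂, m₃, m₄⟩ := card_eigenvalues_a5MatrixR_eq hM
  rw [Nat.card_subtype_comp_of_mapsTo (eigenvalues_a5MatrixR_mem hM) (0 < ·),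
    Nat.card_subtype_comp_of_mapsTo (eigenvalues_a5MatrixR_mem hM) (· < 0)]
  norm_num [filter_insert, filter_singleton, m₁, m₂, m₃, m₄]
end
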